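/- Let p ≥ 3 be odd and q = e^{πi/p}. Define Λ_p = {(s,s') : 0 < s ≤ p-1, 0 ≤ s' ≤ p-1, s + s' + 1 ∈ 2ℤ}. Then the matrix M indexed by Λ_p × Λ_p with entries M_{(s,s'),(n,n')} = -(1/p) q^{n's'} {ns} is invertible. -/

import Mathlib

/-- `q^x := e^{πix/p}`. -/
noncomputable def qpow (p : ℕ) (x : ℂ) : ℂ := Complex.exp (Real.pi * Complex.I * x / (p : ℂ))

/-- The quantum bracket `{x} = q^x - q^{-x}`. -/
noncomputable def qbr (p : ℕ) (x : ℂ) : ℂ := qpow p x - qpow p (-x)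

/-- The index set `Λ_p = {(s,s') : 0 < s ≤ p-1, 0 ≤ s' ≤ p-1, s+s'+1 even}`. -/
noncomputable def Lam (p : ℕ) : Finset (ℤ × ℤ) :=
  (Finset.Ioc 0 ((p : ℤ) - 1) ×ˢ Finset.Icc 0 ((p : ℤ) - 1)).filter
    fun x => Even (x.1 + x.2 + 1)

/-- The atypical S-matrix entry `M_{(s,s'),(n,n')} = -(1/p) q^{n's'} {ns}`. -/
noncomputable def Smat (p : ℕ) (s n : ℤ × ℤ) : ℂ :=
  -(1 / (p : ℂ)) * qpow p ((n.2 * s.2 : ℤ) : ℂ) * qbr p ((n.1 * s.1 : ℤ) : ℂ)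

namespace S11

noncomputable def ζ (p : ℕ) : ℂ := Complex.exp (Real.pi * Complex.I / p)

lemma hz (p : ℕ) : ζ p ≠ 0 := Complex.exp_ne_zero _

lemma qpow_int (p : ℕ) (m : ℤ) : qpow p ((m : ℤ) : ℂ) = ζ p ^ m := by
  unfold qpow ζ
  rw [show Real.pi * Complex.I * (m : ℂ) / p = (m : ℂ) * (Real.pi * Complex.I / p) by ring]
  exact Complex.exp_int_mul _ m

lemma qbr_int (p : ℕ) (m : ℤ) : qbr p ((m : ℤ) : ℂ) = ζ p ^ m - ζ p ^ (-m) := by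
  unfold qbr
  rw [show -((m : ℤ) : ℂ) = (((-m : ℤ) : ℤ) : ℂ) by push_cast; ring, qpow_int, qpow_int]

lemma hprim {p : ℕ} (hp : p ≠ 0) : IsPrimitiveRoot (ζ p) (2 * p) := by
  have h := Complex.isPrimitiveRoot_exp (2 * p) (by omega)
  have he : Complex.exp (2 * Real.pi * Complex.I / ((2 * p : ℕ) : ℂ)) = ζ p := by
    unfold ζ
    congr 1
    have hp' : (p : ℂ) ≠ 0 := Nat.cast_ne_zero.mpr hp
    push_cast
    field_simp
  rwa [he] at h

lemma hone {p : ℕ} (hp : p ≠ 0) (k : ℤ) : ζ p ^ k = 1 ↔ (2 * (p : ℤ)) ∣ k := by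
  have := (hprim hp).zpow_eq_one_iff_dvd k
  rwa [show ((2 * p : ℕ) : ℤ) = 2 * (p : ℤ) by push_cast; ring] at this

lemma hm1 {p : ℕ} (hp : p ≠ 0) : ζ p ^ ((p : ℕ) : ℤ) = -1 := by
  unfold ζ
  rw [← Complex.exp_int_mul]
  rw [show (((p : ℕ) : ℤ) : ℂ) * (Real.pi * Complex.I / p) = Real.pi * Complex.I by
    have hp' : (p : ℂ) ≠ 0 := Nat.cast_ne_zero.mpr hp
    push_cast; field_simp]
  exact Complex.exp_pi_mul_I

noncomputable def A (p : ℕ) (k : ℤ) : ℂ := ∑ m ∈ Finset.Icc (0:ℤ) ((p:ℤ)-1), ζ p ^ (m * k)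
noncomputable def B (p : ℕ) (k : ℤ) : ℂ := ∑ n ∈ Finset.Ioc (0:ℤ) ((p:ℤ)-1), ζ p ^ (n * k)

lemma A_geom {p : ℕ} (hp : p ≠ 0) (k : ℤ) : A p k = ∑ i ∈ Finset.range p, (ζ p ^ k) ^ i := by
  unfold A
  refine Finset.sum_nbij' (fun m => m.toNat) (fun i => (i : ℤ)) ?_ ?_ ?_ ?_ ?_
  · intro m hm
    simp only [Finset.mem_Icc] at hm
    simp only [Finset.mem_range]
    omega
  · intro i hi
    simp only [Finset.mem_range] at hi
    simp only [Finset.mem_Icc]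
    omega
  · intro m hm
    simp only [Finset.mem_Icc] at hm
    show ((m.toNat : ℤ)) = m
    omega
  · intro i _
    simp
  · intro m hm
    simp only [Finset.mem_Icc] at hm
    rw [mul_comm, zpow_mul, ← zpow_natCast (ζ p ^ k) m.toNat]
    congr 1
    omega

lemma pow_p {p : ℕ} (hp : p ≠ 0) (k : ℤ) : (ζ p ^ k) ^ p = (-1 : ℂ) ^ k := by
  rw [← zpow_natCast (ζ p ^ k) p, ← zpow_mul, mul_comm k ((p : ℕ) : ℤ), zpow_mul, hm1 hp]

lemma A_dvd {p : ℕ} (hp : p ≠ 0) {k : ℤ} (h : (2 * (p : ℤ)) ∣ k) : A p k = p := by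
  rw [A_geom hp, (hone hp k).mpr h]
  simp

lemma A_even {p : ℕ} (hp : p ≠ 0) {k : ℤ} (he : Even k) (h : ¬ (2 * (p : ℤ)) ∣ k) :
    A p k = 0 := by
  have hx : ζ p ^ k ≠ 1 := fun hx => h ((hone hp k).mp hx)
  rw [A_geom hp, geom_sum_eq hx, pow_p hp, he.neg_one_zpow]
  simp

lemma A_odd {p : ℕ} (hp : p ≠ 0) {k : ℤ} (ho : Odd k) : A p k + A p (-k) = 2 := by
  have hx1 : ζ p ^ k ≠ 1 := by
    rw [Ne, hone hp]
    intro hdvd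
    have : (2:ℤ) ∣ k := dvd_trans ⟨(p:ℤ), rfl⟩ hdvd
    rw [Int.odd_iff] at ho
    omega
  have hy1 : ζ p ^ (-k) ≠ 1 := by
    rw [Ne, hone hp]
    intro hdvd
    have : (2:ℤ) ∣ k := (dvd_neg.mp (dvd_trans ⟨(p:ℤ), rfl⟩ hdvd))
    rw [Int.odd_iff] at ho
    omega
  have hxp : (ζ p ^ k) ^ p = -1 := by rw [pow_p hp, ho.neg_one_zpow]
  have hyp : (ζ p ^ (-k)) ^ p = -1 := by
    rw [pow_p hp]
    exact (Odd.neg_one_zpow (by exact ho.neg))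
  rw [A_geom hp, A_geom hp, geom_sum_eq hx1, geom_sum_eq hy1, hxp, hyp]
  have h1 : ζ p ^ k - 1 ≠ 0 := sub_ne_zero.mpr hx1
  have h2 : ζ p ^ (-k) - 1 ≠ 0 := sub_ne_zero.mpr hy1
  have h3 : ζ p ^ (-k) = (ζ p ^ k)⁻¹ := by rw [zpow_neg]
  have h0 : ζ p ^ k ≠ 0 := zpow_ne_zero _ (hz p)
  rw [h3] at h2 ⊢
  have h1' : (1 : ℂ) - ζ p ^ k ≠ 0 := fun h => hx1 (by linear_combination -h)
  field_simp
  ring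

lemma A_per {p : ℕ} (hp : p ≠ 0) (k : ℤ) : A p (k + 2 * p) = A p k := by
  unfold A
  refine Finset.sum_congr rfl fun m _ => ?_
  rw [mul_add, zpow_add₀ (hz p)]
  rw [(hone hp (m * (2 * (p:ℤ)))).mpr ⟨m, by ring⟩, mul_one]

lemma B_eq {p : ℕ} (hp : p ≠ 0) (k : ℤ) : B p k = A p k - 1 := by
  unfold A B
  rw [Finset.Icc_eq_cons_Ioc (by omega : (0:ℤ) ≤ (p:ℤ) - 1), Finset.sum_cons]
  simp

lemma split (S T : Finset ℤ) (u v f h : ℤ → ℂ) :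
    ∑ n ∈ S, ∑ m ∈ T, (1/2 : ℂ) * (u m * f n - v m * h n)
      = (1/2) * ((∑ m ∈ T, u m) * (∑ n ∈ S, f n) - (∑ m ∈ T, v m) * (∑ n ∈ S, h n)) := by
  rw [Finset.sum_comm, Finset.sum_mul_sum, Finset.sum_mul_sum, mul_sub, Finset.mul_sum,
    Finset.mul_sum, ← Finset.sum_sub_distrib]
  refine Finset.sum_congr rfl fun m _ => ?_
  rw [Finset.mul_sum, Finset.mul_sum, ← Finset.sum_sub_distrib]
  refine Finset.sum_congr rfl fun n _ => by ring

lemma expand_br {x : ℂ} (hx : x ≠ 0) (a b : ℤ) :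
    (x ^ a - x ^ (-a)) * (x ^ b - x ^ (-b))
      = x ^ (a + b) + x ^ (-(a + b)) - x ^ (a - b) - x ^ (b - a) := by
  have ha : x ^ a ≠ 0 := zpow_ne_zero _ hx
  have hb : x ^ b ≠ 0 := zpow_ne_zero _ hx
  simp only [zpow_add₀ hx, zpow_sub₀ hx, zpow_neg]
  field_simp
  ring

lemma expand_br2 {x : ℂ} (hx : x ≠ 0) (a b c : ℤ) :
    x ^ c * ((x ^ a - x ^ (-a)) * (x ^ b - x ^ (-b)))
      = x ^ (a + b + c) + x ^ (c - a - b) - x ^ (a - b + c) - x ^ (b - a + c) := by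
  have ha : x ^ a ≠ 0 := zpow_ne_zero _ hx
  have hb : x ^ b ≠ 0 := zpow_ne_zero _ hx
  simp only [zpow_add₀ hx, zpow_sub₀ hx, zpow_neg]
  field_simp
  ring

lemma key {p : ℕ} (hp : 3 ≤ p) (hodd : Odd p) (s t s' t' : ℤ)
    (hs1 : 0 < s) (hs2 : s ≤ (p:ℤ)-1) (ht1 : 0 < t) (ht2 : t ≤ (p:ℤ)-1)
    (hd1 : -((p:ℤ)-1) ≤ s'-t') (hd2 : s'-t' ≤ (p:ℤ)-1)
    (hpar : Even (s + t + (s' - t'))) :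
    ∑ c ∈ Lam p, ζ p ^ (c.2 * (s'-t')) *
      ((ζ p ^ (c.1*s) - ζ p ^ (-(c.1*s))) * (ζ p ^ (c.1*t) - ζ p ^ (-(c.1*t))))
      = if s = t ∧ s' = t' then -((p:ℂ))^2 else 0 := by
  have hp0 : p ≠ 0 := by omega
  obtain ⟨j, hj⟩ := hodd
  set d := s' - t' with hdd
  -- step 1: unfold the filtered sum
  rw [Lam, Finset.sum_filter, Finset.sum_product]
  -- step 2: pointwise weight
  have point : ∀ n m : ℤ,
      (if Even (n + m + 1) then ζ p ^ (m * d) *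
        ((ζ p ^ (n*s) - ζ p ^ (-(n*s))) * (ζ p ^ (n*t) - ζ p ^ (-(n*t)))) else 0)
      = (1/2 : ℂ) * (ζ p ^ (m * d) *
          ((ζ p ^ (n*s) - ζ p ^ (-(n*s))) * (ζ p ^ (n*t) - ζ p ^ (-(n*t))))
        - ζ p ^ (m * (d + (p:ℤ))) * (ζ p ^ (n * ((p:ℕ):ℤ)) *
          ((ζ p ^ (n*s) - ζ p ^ (-(n*s))) * (ζ p ^ (n*t) - ζ p ^ (-(n*t)))))) := by
    intro n m
    have h2 : ζ p ^ (m * (d + (p:ℤ))) = ζ p ^ (m * d) * ζ p ^ (m * ((p:ℕ):ℤ)) := by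
      rw [← zpow_add₀ (hz p)]
      congr 1
      ring
    have hmulpow : ζ p ^ (n * ((p:ℕ):ℤ)) * ζ p ^ (m * ((p:ℕ):ℤ)) = (-1 : ℂ) ^ (n + m) := by
      rw [← zpow_add₀ (hz p), show n * ((p:ℕ):ℤ) + m * ((p:ℕ):ℤ) = ((p:ℕ):ℤ) * (n + m) by ring,
        zpow_mul, hm1 hp0]
    by_cases hE : Even (n + m + 1)
    · rw [if_pos hE]
      have ho : Odd (n + m) := by
        rw [Int.odd_iff]
        rw [Int.even_iff] at hE
        omega
      rw [ho.neg_one_zpow] at hmulpow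
      linear_combination (1/2) * ζ p ^ (n * ((p:ℕ):ℤ)) *
          ((ζ p ^ (n*s) - ζ p ^ (-(n*s))) * (ζ p ^ (n*t) - ζ p ^ (-(n*t)))) * h2
        + (1/2) * ζ p ^ (m * d) *
          ((ζ p ^ (n*s) - ζ p ^ (-(n*s))) * (ζ p ^ (n*t) - ζ p ^ (-(n*t)))) * hmulpow
    · rw [if_neg hE]
      have ho : Even (n + m) := by
        rw [Int.even_iff]
        rw [Int.even_iff] at hE
        omega
      rw [ho.neg_one_zpow] at hmulpow
      linear_combination (1/2) * ζ p ^ (n * ((p:ℕ):ℤ)) *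
          ((ζ p ^ (n*s) - ζ p ^ (-(n*s))) * (ζ p ^ (n*t) - ζ p ^ (-(n*t)))) * h2
        + (1/2) * ζ p ^ (m * d) *
          ((ζ p ^ (n*s) - ζ p ^ (-(n*s))) * (ζ p ^ (n*t) - ζ p ^ (-(n*t)))) * hmulpow
  -- apply pointwise rewrite and split
  have e1 := split (Finset.Ioc 0 ((p:ℤ)-1)) (Finset.Icc 0 ((p:ℤ)-1))
      (fun m => ζ p ^ (m * d)) (fun m => ζ p ^ (m * (d + (p:ℤ))))
      (fun n => (ζ p ^ (n*s) - ζ p ^ (-(n*s))) * (ζ p ^ (n*t) - ζ p ^ (-(n*t))))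
      (fun n => ζ p ^ (n * ((p:ℕ):ℤ)) *
        ((ζ p ^ (n*s) - ζ p ^ (-(n*s))) * (ζ p ^ (n*t) - ζ p ^ (-(n*t)))))
  refine Eq.trans (Finset.sum_congr rfl fun n _ => Finset.sum_congr rfl fun m _ => point n m)
    (Eq.trans e1 ?_)
  clear e1 point
  -- identify the inner sums
  have hS1 : (∑ n ∈ Finset.Ioc (0:ℤ) ((p:ℤ)-1),
      (ζ p ^ (n*s) - ζ p ^ (-(n*s))) * (ζ p ^ (n*t) - ζ p ^ (-(n*t))))
      = B p (s+t) + B p (-(s+t)) - B p (s-t) - B p (t-s) := by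
    unfold B
    rw [← Finset.sum_add_distrib, ← Finset.sum_sub_distrib, ← Finset.sum_sub_distrib]
    refine Finset.sum_congr rfl fun n _ => ?_
    have hxn : ζ p ^ n ≠ 0 := zpow_ne_zero _ (hz p)
    rw [show -(n*s) = n*(-s) by ring, show -(n*t) = n*(-t) by ring]
    simp only [zpow_mul]
    exact expand_br hxn s t
  have hS2 : (∑ n ∈ Finset.Ioc (0:ℤ) ((p:ℤ)-1), ζ p ^ (n * ((p:ℕ):ℤ)) *
      ((ζ p ^ (n*s) - ζ p ^ (-(n*s))) * (ζ p ^ (n*t) - ζ p ^ (-(n*t)))))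
      = B p (s+t+(p:ℤ)) + B p ((p:ℤ)-s-t) - B p (s-t+(p:ℤ)) - B p (t-s+(p:ℤ)) := by
    unfold B
    rw [← Finset.sum_add_distrib, ← Finset.sum_sub_distrib, ← Finset.sum_sub_distrib]
    refine Finset.sum_congr rfl fun n _ => ?_
    have hxn : ζ p ^ n ≠ 0 := zpow_ne_zero _ (hz p)
    rw [show -(n*s) = n*(-s) by ring, show -(n*t) = n*(-t) by ring,
      show n*(s+t+(p:ℤ)) = n*(s+t+((p:ℕ):ℤ)) by push_cast; ring,
      show n*((p:ℤ)-s-t) = n*(((p:ℕ):ℤ)-s-t) by push_cast; ring,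
      show n*(s-t+(p:ℤ)) = n*(s-t+((p:ℕ):ℤ)) by push_cast; ring,
      show n*(t-s+(p:ℤ)) = n*(t-s+((p:ℕ):ℤ)) by push_cast; ring]
    simp only [zpow_mul]
    have e := expand_br2 hxn s t ((p:ℕ):ℤ)
    rw [show s+t+((p:ℕ):ℤ) = s + t + ((p:ℕ):ℤ) from rfl]
    calc (ζ p ^ n) ^ ((p:ℕ):ℤ) *
          (((ζ p ^ n) ^ s - (ζ p ^ n) ^ (-s)) * ((ζ p ^ n) ^ t - (ζ p ^ n) ^ (-t)))
        = (ζ p ^ n) ^ (s + t + ((p:ℕ):ℤ)) + (ζ p ^ n) ^ (((p:ℕ):ℤ) - s - t)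
          - (ζ p ^ n) ^ (s - t + ((p:ℕ):ℤ)) - (ζ p ^ n) ^ (t - s + ((p:ℕ):ℤ)) := e
      _ = _ := by norm_num
  show (1/2 : ℂ) * (A p d * _ - A p (d + (p:ℤ)) * _) = _
  rw [hS1, hS2]
  simp only [B_eq hp0]
  -- arithmetic helpers
  have hnd : ∀ k : ℤ, k ≠ 0 → -(2*(p:ℤ)) < k → k < 2*(p:ℤ) → ¬ (2 * (p:ℤ)) ∣ k := by
    intro k h0 hl hr hdvd
    exact h0 (Int.eq_zero_of_abs_lt_dvd hdvd (abs_lt.mpr ⟨hl, hr⟩))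
  by_cases hst : Even (s + t)
  · -- s + t even, so d even
    have hdE : Even d := by
      rw [Int.even_iff] at hpar hst ⊢; omega
    have hOu : Odd (s + t + (p:ℤ)) := by
      rw [Int.odd_iff]; rw [Int.even_iff] at hst; omega
    have hOv : Odd (s - t + (p:ℤ)) := by
      rw [Int.odd_iff]; rw [Int.even_iff] at hst; omega
    have h1 : A p (s+t+(p:ℤ)) + A p ((p:ℤ)-s-t) = 2 := by
      have e := A_per hp0 (-(s+t+(p:ℤ)))
      rw [show -(s+t+(p:ℤ)) + 2*((p:ℕ):ℤ) = (p:ℤ)-s-t by push_cast; ring] at e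
      rw [e]
      exact A_odd hp0 hOu
    have h2 : A p (s-t+(p:ℤ)) + A p (t-s+(p:ℤ)) = 2 := by
      have e := A_per hp0 (-(s-t+(p:ℤ)))
      rw [show -(s-t+(p:ℤ)) + 2*((p:ℕ):ℤ) = t-s+(p:ℤ) by push_cast; ring] at e
      rw [e]
      exact A_odd hp0 hOv
    have hu1 : A p (s+t) = 0 := A_even hp0 hst (hnd _ (by omega) (by omega) (by omega))
    have hu2 : A p (-(s+t)) = 0 := A_even hp0 hst.neg (by
      intro hdvd
      exact hnd (s+t) (by omega) (by omega) (by omega) ((dvd_neg).mp hdvd))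
    by_cases hstq : s = t
    · subst hstq
      have hv1 : A p (s - s) = p := by
        rw [sub_self]; exact A_dvd hp0 (dvd_zero _)
      by_cases hq : s' = t'
      · have hd0 : d = 0 := by omega
        have hAd : A p d = p := by rw [hd0]; exact A_dvd hp0 (dvd_zero _)
        rw [if_pos ⟨rfl, hq⟩]
        linear_combination (1/2) * (A p d) * hu1 + (1/2) * (A p d) * hu2
          - (1/2) * (A p d) * hv1 - (1/2) * (A p d) * hv1 - (p:ℂ) * hAd
          - (1/2) * (A p (d + (p:ℤ))) * h1 + (1/2) * (A p (d + (p:ℤ))) * h2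
      · have hAd : A p d = 0 := A_even hp0 hdE (hnd _ (by omega) (by omega) (by omega))
        rw [if_neg (by tauto)]
        linear_combination (1/2) * (A p d) * hu1 + (1/2) * (A p d) * hu2
          - (1/2) * (A p d) * hv1 - (1/2) * (A p d) * hv1 - (p:ℂ) * hAd
          - (1/2) * (A p (d + (p:ℤ))) * h1 + (1/2) * (A p (d + (p:ℤ))) * h2
    · have hvE : Even (s - t) := by
        rw [Int.even_iff] at hst ⊢; omega
      have hv1 : A p (s-t) = 0 := A_even hp0 hvE (hnd _ (by omega) (by omega) (by omega))
      have hv2 : A p (t-s) = 0 := A_even hp0 (by rw [Int.even_iff] at hvE ⊢; omega)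
        (hnd _ (by omega) (by omega) (by omega))
      rw [if_neg (by tauto)]
      linear_combination (1/2) * (A p d) * hu1 + (1/2) * (A p d) * hu2
        - (1/2) * (A p d) * hv1 - (1/2) * (A p d) * hv2
        - (1/2) * (A p (d + (p:ℤ))) * h1 + (1/2) * (A p (d + (p:ℤ))) * h2
  · -- s + t odd
    have hstO : Odd (s + t) := Int.not_even_iff_odd.mp hst
    have hne : ¬ (s = t ∧ s' = t') := by
      rintro ⟨h, -⟩
      exact hst (by rw [h]; exact Even.add_self t)
    rw [if_neg hne]
    have hU : A p (s+t) + A p (-(s+t)) = 2 := A_odd hp0 hstO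
    have hV : A p (s-t) + A p (t-s) = 2 := by
      have e := A_odd hp0 (k := s - t) (by rw [Int.odd_iff] at hstO ⊢; omega)
      rwa [show -(s-t) = t-s by ring] at e
    have hb : A p (d + (p:ℤ)) = 0 := by
      refine A_even hp0 ?_ (hnd _ (by omega) (by omega) (by omega))
      rw [Int.even_iff]
      rw [Int.odd_iff] at hstO
      rw [Int.even_iff] at hpar
      omega
    linear_combination (1/2) * (A p d) * hU - (1/2) * (A p d) * hV
      - (1/2) * ((A p (s+t+(p:ℤ)) - 1) + (A p ((p:ℤ)-s-t) - 1)
        - (A p (s-t+(p:ℤ)) - 1) - (A p (t-s+(p:ℤ)) - 1)) * hb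

end S11

open S11 in
/-- For odd `p ≥ 3`, the matrix `M_{(s,s'),(n,n')} = -(1/p) q^{n's'} {ns}` indexed by
`Λ_p × Λ_p` is invertible. -/
theorem stmt11 (p : ℕ) (hp : 3 ≤ p) (hodd : Odd p) :
    ∃ N : ℤ × ℤ → ℤ × ℤ → ℂ,
      (∀ a ∈ Lam p, ∀ b ∈ Lam p,
        ∑ c ∈ Lam p, Smat p a c * N c b = if a = b then 1 else 0) ∧
      (∀ a ∈ Lam p, ∀ b ∈ Lam p,
        ∑ c ∈ Lam p, N a c * Smat p c b = if a = b then 1 else 0) := by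
  have hp0 : p ≠ 0 := by omega
  have hpc : (p : ℂ) ≠ 0 := Nat.cast_ne_zero.mpr hp0
  obtain ⟨j, hj⟩ := hodd
  refine ⟨fun a b => (1 / (p : ℂ)) * qpow p ((-(a.2 * b.2) : ℤ) : ℂ) *
      qbr p ((a.1 * b.1 : ℤ) : ℂ), ?_, ?_⟩
  · intro a ha b hb
    simp only [Lam, Finset.mem_filter, Finset.mem_product, Finset.mem_Ioc, Finset.mem_Icc] at ha hb
    have hterm : ∀ c : ℤ × ℤ, Smat p a c *
        ((1 / (p : ℂ)) * qpow p ((-(c.2 * b.2) : ℤ) : ℂ) * qbr p ((c.1 * b.1 : ℤ) : ℂ))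
        = (-(1 / (p : ℂ)^2)) * (ζ p ^ (c.2 * (a.2 - b.2)) *
          ((ζ p ^ (c.1 * a.1) - ζ p ^ (-(c.1 * a.1))) *
           (ζ p ^ (c.1 * b.1) - ζ p ^ (-(c.1 * b.1))))) := by
      intro c
      unfold Smat
      rw [qpow_int, qpow_int, qbr_int, qbr_int,
        show c.2 * (a.2 - b.2) = c.2 * a.2 + (-(c.2 * b.2)) by ring, zpow_add₀ (hz p)]
      ring
    rw [Finset.sum_congr rfl fun c _ => hterm c, ← Finset.mul_sum,
      key hp ⟨j, hj⟩ a.1 b.1 a.2 b.2 ha.1.1.1 ha.1.1.2 hb.1.1.1 hb.1.1.2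
        (by omega) (by omega)
        (by
          have h1 := ha.2
          have h2 := hb.2
          rw [Int.even_iff] at h1 h2 ⊢
          omega)]
    by_cases hab : a = b
    · rw [if_pos (by rw [hab]; exact ⟨rfl, rfl⟩), if_pos hab]
      field_simp
    · rw [if_neg (fun h => hab (Prod.ext h.1 h.2)), if_neg hab, mul_zero]
  · intro a ha b hb
    simp only [Lam, Finset.mem_filter, Finset.mem_product, Finset.mem_Ioc, Finset.mem_Icc] at ha hb
    have hterm : ∀ c : ℤ × ℤ,
        ((1 / (p : ℂ)) * qpow p ((-(a.2 * c.2) : ℤ) : ℂ) * qbr p ((a.1 * c.1 : ℤ) : ℂ)) *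
          Smat p c b
        = (-(1 / (p : ℂ)^2)) * (ζ p ^ (c.2 * (b.2 - a.2)) *
          ((ζ p ^ (c.1 * a.1) - ζ p ^ (-(c.1 * a.1))) *
           (ζ p ^ (c.1 * b.1) - ζ p ^ (-(c.1 * b.1))))) := by
      intro c
      unfold Smat
      rw [qpow_int, qpow_int, qbr_int, qbr_int,
        show c.2 * (b.2 - a.2) = (-(a.2 * c.2)) + c.2 * b.2 by ring, zpow_add₀ (hz p),
        show a.1 * c.1 = c.1 * a.1 by ring]
      ring
    rw [Finset.sum_congr rfl fun c _ => hterm c, ← Finset.mul_sum,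
      key hp ⟨j, hj⟩ a.1 b.1 b.2 a.2 ha.1.1.1 ha.1.1.2 hb.1.1.1 hb.1.1.2
        (by omega) (by omega)
        (by
          have h1 := ha.2
          have h2 := hb.2
          rw [Int.even_iff] at h1 h2 ⊢
          omega)]
    by_cases hab : a = b
    · rw [if_pos (by rw [hab]; exact ⟨rfl, rfl⟩), if_pos hab]
      field_simp
    · rw [if_neg (fun h => hab (Prod.ext h.1 h.2.symm)), if_neg hab, mul_zero]
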